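/- Let k be a field, n ≥ 1 an integer, and g_n(t) = 2n·d(t) where d(t) is the distance from t to {k/n : k ∈ ℤ}. Let Q̄ be the finite poset with underlying set {(i,j) ∈ ℕ × ℕ : i ≤ j ≤ n} ∪ {⊤}, where (i,j) ⪯ (i',j') iff i' ≤ i and j ≤ j', and (i,j) ⪯ ⊤ for all (i,j). Define the functor N̄ : Q̄ ⥤ ModuleCat k by N̄(i,j) = the free k-module on the set of connected components of {t ∈ ℝ : i/n ≤ t ≤ j/n and g_n(t) ≤ 1/2}, and N̄(⊤) = the free k-module on the set of connected components of {t ∈ ℝ : 0 ≤ t ≤ 1 and g_n(t) ≤ 1} (which is [0,1], so N̄(⊤) ≅ k), with structure maps sending the basis element of a component to the basis element of the component containing it. Then N̄ is indecomposable: whenever N̄ is isomorphic to a biproduct A ⊞ B of functors Q̄ ⥤ ModuleCat k, either A is pointwise zero or B is pointwise zero. -/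

import Mathlib

open CategoryTheory

noncomputable section

/-- The map induced on connected components by an inclusion of subspaces. -/
def compMap {Y : Type} [TopologicalSpace Y] {A B : Set Y} (h : A ⊆ B) :
    ConnectedComponents A → ConnectedComponents B :=
  (continuous_inclusion h).connectedComponentsMap

lemma compMap_id {Y : Type} [TopologicalSpace Y] {A : Set Y} (h : A ⊆ A) :
    compMap h = id := by
  funext x
  obtain ⟨y, rfl⟩ := ConnectedComponents.surjective_coe x
  rfl

lemma compMap_comp {Y : Type} [TopologicalSpace Y] {A B C : Set Y}
    (hAB : A ⊆ B) (hBC : B ⊆ C) (hAC : A ⊆ C) :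
    compMap hAC = compMap hBC ∘ compMap hAB := by
  funext x
  obtain ⟨y, rfl⟩ := ConnectedComponents.surjective_coe x
  rfl

/-- The persistence module (valued in free `k`-modules on connected components)
associated to a monotone family of subspaces indexed by a poset. -/
def compFunctor (k : Type) [Field k] {α : Type} [Preorder α] {Y : Type} [TopologicalSpace Y]
    (A : α → Set Y) (mono : Monotone A) : α ⥤ ModuleCat k where
  obj p := ModuleCat.of k (ConnectedComponents (A p) →₀ k)
  map {p q} h := ModuleCat.ofHom (Finsupp.lmapDomain k k (compMap (mono (leOfHom h))))
  map_id p := by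
    apply ModuleCat.hom_ext
    show Finsupp.lmapDomain k k _ = _
    rw [compMap_id]; exact Finsupp.lmapDomain_id _ _
  map_comp {p q r} f g := by
    apply ModuleCat.hom_ext
    show Finsupp.lmapDomain k k _ = _
    rw [compMap_comp (mono (leOfHom f)) (mono (leOfHom g))]
    exact Finsupp.lmapDomain_comp _ _ _ _

/-- The sublevel set `S(a,b,c) = {t ∈ ℝ : a ≤ t ≤ b and g t ≤ c}`. -/
def Slev (g : ℝ → ℝ) (a b c : ℝ) : Set ℝ := {t : ℝ | a ≤ t ∧ t ≤ b ∧ g t ≤ c}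

/-- `g_n(t) = 2n·d(t)` where `d(t)` is the distance from `t` to the set
`{k/n : k ∈ ℤ}`. -/
def gfun (n : ℕ) (t : ℝ) : ℝ := 2 * n * Metric.infDist t {x : ℝ | ∃ k : ℤ, x = k / n}

/-- The poset `Q = {(i,j) ∈ ℕ × ℕ : i ≤ j ≤ n}` with `(i,j) ⪯ (i',j')` iff
`i' ≤ i` and `j ≤ j'`. -/
def QQ (n : ℕ) : Type := {ij : ℕ × ℕ // ij.1 ≤ ij.2 ∧ ij.2 ≤ n}

namespace QQ

variable {n : ℕ}

instance : PartialOrder (QQ n) where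
  le x y := y.1.1 ≤ x.1.1 ∧ x.1.2 ≤ y.1.2
  le_refl x := ⟨le_refl _, le_refl _⟩
  le_trans x y z h h' := ⟨h'.1.trans h.1, h.2.trans h'.2⟩
  le_antisymm x y h h' :=
    Subtype.ext (Prod.ext (le_antisymm h'.1 h.1) (le_antisymm h.2 h'.2))

/-- The first coordinate `i`. -/
def i (q : QQ n) : ℕ := q.1.1
/-- The second coordinate `j`. -/
def j (q : QQ n) : ℕ := q.1.2

end QQ

lemma SlevQ_mono (n : ℕ) :
    Monotone (fun q : QQ n => Slev (gfun n) ((q.i : ℝ) / n) ((q.j : ℝ) / n) (1 / 2)) := by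
  intro q q' h t ht
  have hn : (0 : ℝ) ≤ n := Nat.cast_nonneg n
  refine ⟨le_trans ?_ ht.1, le_trans ht.2.1 ?_, ht.2.2⟩
  · exact div_le_div_of_nonneg_right (by exact_mod_cast h.1) hn
  · exact div_le_div_of_nonneg_right (by exact_mod_cast h.2) hn

/-- The persistence module `N : Q ⥤ ModuleCat k`, assigning to `(i,j)` the free
`k`-module on the set of connected components of `S(i/n, j/n, 1/2)` for the function
`g_n`. -/
def Nfunctor (k : Type) [Field k] (n : ℕ) : QQ n ⥤ ModuleCat k :=
  compFunctor k (fun q : QQ n => Slev (gfun n) ((q.i : ℝ) / n) ((q.j : ℝ) / n) (1 / 2))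
    (SlevQ_mono n)

/-- The interval module `P_m : Q ⥤ ModuleCat k`:  its value at `(i,j)` is the free
`k`-module on a one-element type if `i ≤ m ≤ j` (hence isomorphic to `k`) and the free
`k`-module on the empty type (hence `0`) otherwise, and its structure maps send a basis
element to the corresponding basis element (the identity `k → k`) whenever both values
are nonzero, and are zero otherwise. -/
def Pm (k : Type) [Field k] (n m : ℕ) : QQ n ⥤ ModuleCat k where
  obj q := ModuleCat.of k (PLift (q.i ≤ m ∧ m ≤ q.j) →₀ k)
  map {q q'} h := ModuleCat.ofHom (Finsupp.lmapDomain k k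
    (fun hp => PLift.up ⟨le_trans (leOfHom h).1 hp.down.1, hp.down.2.trans (leOfHom h).2⟩))
  map_id q := by
    apply ModuleCat.hom_ext
    show Finsupp.lmapDomain k k _ = _
    rw [show (fun hp : PLift (q.i ≤ m ∧ m ≤ q.j) =>
        PLift.up (⟨le_trans (leOfHom (𝟙 q)).1 hp.down.1, hp.down.2.trans (leOfHom (𝟙 q)).2⟩ :
          q.i ≤ m ∧ m ≤ q.j)) = id from funext fun _ => Subsingleton.elim _ _]
    exact Finsupp.lmapDomain_id _ _
  map_comp {q q' q''} f g := by
    apply ModuleCat.hom_ext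
    show Finsupp.lmapDomain k k _ = _
    rw [show (fun hp : PLift (q.i ≤ m ∧ m ≤ q.j) =>
        (PLift.up ⟨le_trans (leOfHom (f ≫ g)).1 hp.down.1,
          hp.down.2.trans (leOfHom (f ≫ g)).2⟩ : PLift (q''.i ≤ m ∧ m ≤ q''.j))) =
        (fun hp : PLift (q'.i ≤ m ∧ m ≤ q'.j) =>
          (PLift.up ⟨le_trans (leOfHom g).1 hp.down.1, hp.down.2.trans (leOfHom g).2⟩ :
            PLift (q''.i ≤ m ∧ m ≤ q''.j))) ∘
        (fun hp : PLift (q.i ≤ m ∧ m ≤ q.j) =>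
          (PLift.up ⟨le_trans (leOfHom f).1 hp.down.1, hp.down.2.trans (leOfHom f).2⟩ :
            PLift (q'.i ≤ m ∧ m ≤ q'.j))) from funext fun _ => Subsingleton.elim _ _]
    exact Finsupp.lmapDomain_comp _ _ _ _

end

/-- The family of sublevel sets indexed by `Q̄ = Q ∪ {⊤}`:  the element `(i,j)` is sent
to `S(i/n, j/n, 1/2)` and the top element `⊤` is sent to `S(0, 1, 1)` (for `g_n` the
latter is all of `[0,1]`). -/
def SQbar (n : ℕ) : WithTop (QQ n) → Set ℝ :=
  WithTop.recTopCoe (Slev (gfun n) 0 1 1)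
    (fun q => Slev (gfun n) ((q.i : ℝ) / n) ((q.j : ℝ) / n) (1 / 2))

lemma SQbar_mono (n : ℕ) : Monotone (SQbar n) := by
  intro x y h
  induction y using WithTop.recTopCoe with
  | top =>
    induction x using WithTop.recTopCoe with
    | top => exact Set.Subset.refl _
    | coe q =>
      intro t ht
      simp only [SQbar, WithTop.recTopCoe_coe, WithTop.recTopCoe_top, Slev,
        Set.mem_setOf_eq] at ht ⊢
      refine ⟨le_trans (by positivity) ht.1, le_trans ht.2.1 ?_, ht.2.2.trans (by norm_num)⟩
      rcases Nat.eq_zero_or_pos n with h0 | h0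
      · subst h0
        simp
      · have hn : (0 : ℝ) < n := by exact_mod_cast h0
        rw [div_le_one hn]
        exact_mod_cast q.2.2
  | coe q' =>
    induction x using WithTop.recTopCoe with
    | top => exact absurd h (by simp)
    | coe q =>
      exact SlevQ_mono n (WithTop.coe_le_coe.mp h)

/-- The persistence module `N̄ : Q̄ ⥤ ModuleCat k`, assigning to `(i,j)` the free
`k`-module on the set of connected components of `S(i/n, j/n, 1/2)` and to `⊤` the free
`k`-module on the set of connected components of `S(0,1,1) = [0,1]` (so `N̄(⊤) ≅ k`),
with structure maps sending the basis element of a component to the basis element of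
the component containing it. -/
noncomputable def Nbar (k : Type) [Field k] (n : ℕ) : WithTop (QQ n) ⥤ ModuleCat k :=
  compFunctor k (SQbar n) (SQbar_mono n)

/-!
An endomorphism `φ` of `N̄` with `φ_⊤ = 1` is the identity. At a diagonal point `(m,m)` the
sublevel set is the single point `m/n`, so `N̄(m,m) → N̄(⊤)` is injective and naturality gives
`φ_(m,m) = 1`. Every component of `S(i/n, j/n, 1/2)` contains the grid point `m/n` nearest to
any of its points, with `i ≤ m ≤ j`, so its basis vector comes from `N̄(m,m)` and naturality
gives `φ_(i,j) = 1`. Since `N̄(⊤) ≅ k`, an idempotent `e` has `e_⊤ ∈ {0, 1}`; applying this to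
`e` or `1 - e` shows `e ∈ {0, 1}`, so `N̄` has no nontrivial direct summand.
-/

open Set Metric CategoryTheory.Limits

theorem isZero_or_isZero_of_iso_biprod {C : Type*} [Category C] [Preadditive C] {X A B : C}
    [HasBinaryBiproduct A B] (hX : ∀ e : X ⟶ X, e ≫ e = e → e = 0 ∨ e = 𝟙 X)
    (h : X ≅ A ⊞ B) : IsZero A ∨ IsZero B := by
  set e := h.hom ≫ biprod.fst ≫ biprod.inl ≫ h.inv
  have hidA : 𝟙 A = biprod.inl ≫ h.inv ≫ e ≫ h.hom ≫ biprod.fst := by simp [e]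
  have hidB : 𝟙 B = biprod.inr ≫ h.inv ≫ (𝟙 X - e) ≫ h.hom ≫ biprod.snd := by simp [e]
  rcases hX e (by simp [e]) with he | he
  · left
    rw [IsZero.iff_id_eq_zero, hidA, he]
    simp
  · right
    rw [IsZero.iff_id_eq_zero, hidB, he, sub_self]
    simp

theorem Finsupp.linearMap_eq_zero_or_id_of_idempotent {R C : Type*} [CommRing R]
    [NoZeroDivisors R] [Unique C] (ψ : (C →₀ R) →ₗ[R] (C →₀ R)) (hψ : ψ ∘ₗ ψ = ψ) :
    ψ = 0 ∨ ψ = LinearMap.id := by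
  set a := ψ (single default 1) default
  have hψa : ψ = a • LinearMap.id := by
    ext c
    simp [Unique.eq_default, a]
  have ha : IsIdempotentElem a := by
    have hψ1 := congrArg (fun φ => φ (single default 1) default) hψ
    rw [hψa] at hψ1
    simpa [IsIdempotentElem] using hψ1
  rcases IsIdempotentElem.iff_eq_zero_or_one.1 ha with h | h <;> simp [hψa, h]

theorem CategoryTheory.NatTrans.app_eq_id_of_mono_map {C D : Type*} [Category C] [Category D]
    {F : C ⥤ D} (φ : F ⟶ F) {x y : C} (f : y ⟶ x) [Mono (F.map f)] (hx : φ.app x = 𝟙 _) :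
    φ.app y = 𝟙 _ := by
  rw [← cancel_mono (F.map f), ← φ.naturality, hx, Category.comp_id, Category.id_comp]

theorem ConnectedComponents.mk_eq_of_isPreconnected {X : Type*} [TopologicalSpace X]
    {s t : Set X} (hts : t ⊆ s) (ht : IsPreconnected t) {x y : X} (hx : x ∈ t) (hy : y ∈ t) :
    ConnectedComponents.mk (⟨x, hts hx⟩ : s) = ConnectedComponents.mk ⟨y, hts hy⟩ := by
  have hxy : x ∈ connectedComponentIn s y := ht.subset_connectedComponentIn hy hts hx
  rw [connectedComponentIn_eq_image (hts hy)] at hxy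
  obtain ⟨z, hz, rfl⟩ := hxy
  exact ConnectedComponents.coe_eq_coe'.2 hz

section compFunctor

variable {k : Type} [Field k] {α : Type} [Preorder α] {Y : Type} [TopologicalSpace Y]
  {A : α → Set Y} {mono : Monotone A}

theorem compFunctor_map_single {x y : α} (f : x ⟶ y) (c : ConnectedComponents (A x)) (b : k) :
    ((compFunctor k A mono).map f).hom (Finsupp.single c b) =
      Finsupp.single (compMap (mono (leOfHom f)) c) b :=
  Finsupp.mapDomain_single

theorem compFunctor_mono_map {x y : α} (f : x ⟶ y)
    (hinj : Function.Injective (compMap (mono (leOfHom f)))) :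
    Mono ((compFunctor k A mono).map f) :=
  (ModuleCat.mono_iff_injective _).2 (Finsupp.mapDomain_injective hinj)

theorem compFunctor_app_eq_id_of_forall_mem_range
    (φ : compFunctor k A mono ⟶ compFunctor k A mono) (x : α)
    (hcov : ∀ c : ConnectedComponents (A x), ∃ y, ∃ hyx : y ≤ x,
      φ.app y = 𝟙 _ ∧ c ∈ range (compMap (mono hyx))) :
    φ.app x = 𝟙 _ := by
  refine ModuleCat.hom_ext (Finsupp.lhom_ext fun c b => ?_)
  obtain ⟨y, hyx, hy, c, rfl⟩ := hcov c
  have hfix : (φ.app x).hom (((compFunctor k A mono).map (homOfLE hyx)).hom (Finsupp.single c b)) =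
      ((compFunctor k A mono).map (homOfLE hyx)).hom (Finsupp.single c b) := by
    have h := LinearMap.congr_fun (congrArg ModuleCat.Hom.hom (φ.naturality (homOfLE hyx)))
      (Finsupp.single c b)
    rwa [hy, Category.id_comp] at h
  rwa [compFunctor_map_single] at hfix

end compFunctor

theorem round_mono {α : Type*} [Field α] [LinearOrder α] [IsStrictOrderedRing α] [FloorRing α] :
    Monotone (round : α → ℤ) := fun x y hxy => by
  simp only [round_eq]
  exact Int.floor_mono (by linarith)

theorem natCast_mul_abs_sub_div {n : ℕ} (hn : 0 < n) (t : ℝ) (z : ℤ) :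
    n * |t - z / n| = |n * t - z| := by
  have hn' : (n : ℝ) ≠ 0 := by positivity
  calc (n : ℝ) * |t - z / n| = |n * (t - z / n)| := by rw [abs_mul, Nat.abs_cast]
    _ = |n * t - z| := by rw [mul_sub, mul_div_cancel₀ _ hn']

section gfun

variable (n : ℕ)

theorem abs_sub_round_div_le (t : ℝ) (m : ℤ) : |t - round (n * t) / n| ≤ |t - m / n| := by
  rcases n.eq_zero_or_pos with rfl | hn
  · simp
  refine le_of_mul_le_mul_left ?_ (show (0 : ℝ) < n by exact_mod_cast hn)
  rw [natCast_mul_abs_sub_div hn, natCast_mul_abs_sub_div hn]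
  exact round_le _ m

theorem gfun_le (t : ℝ) (m : ℤ) : gfun n t ≤ 2 * n * |t - m / n| :=
  mul_le_mul_of_nonneg_left (infDist_le_dist_of_mem ⟨m, rfl⟩) (by positivity)

theorem gfun_eq (t : ℝ) : gfun n t = 2 * n * |t - round (n * t) / n| := by
  refine (gfun_le n t _).antisymm (mul_le_mul_of_nonneg_left ?_ (by positivity))
  have hne : {x : ℝ | ∃ k : ℤ, x = k / n}.Nonempty := ⟨0, 0, by simp⟩
  rw [le_infDist hne]
  rintro _ ⟨m, rfl⟩
  exact abs_sub_round_div_le n t m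

theorem gfun_natCast_div (m : ℕ) : gfun n (m / n) = 0 := by
  have hmem : (m / n : ℝ) ∈ {x : ℝ | ∃ k : ℤ, x = k / n} := ⟨m, by push_cast; rfl⟩
  rw [gfun, infDist_zero_of_mem hmem, mul_zero]

theorem gfun_le_one (t : ℝ) : gfun n t ≤ 1 := by
  rcases n.eq_zero_or_pos with rfl | hn
  · simp [gfun]
  have h := abs_sub_round ((n : ℝ) * t)
  rw [gfun_eq, mul_assoc, natCast_mul_abs_sub_div hn]
  linarith

theorem gfun_le_of_mem_uIcc {t s : ℝ} (hs : s ∈ uIcc t (round (n * t) / n)) :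
    gfun n s ≤ gfun n t := by
  rw [gfun_eq n t, abs_sub_comm t]
  refine (gfun_le n s (round (n * t))).trans (mul_le_mul_of_nonneg_left ?_ (by positivity))
  rw [abs_sub_comm]
  exact abs_sub_right_of_mem_uIcc hs

end gfun

theorem Slev_subsingleton (g : ℝ → ℝ) (a c : ℝ) : (Slev g a a c).Subsingleton :=
  fun _ hs _ ht => (le_antisymm hs.2.1 hs.1).trans (le_antisymm ht.2.1 ht.1).symm

theorem SQbar_top (n : ℕ) : SQbar n ⊤ = Icc 0 1 := by
  ext t
  simp [SQbar, Slev, gfun_le_one]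

theorem round_mem_Icc_of_mem_SQbar {n : ℕ} {q : QQ n} {t : ℝ} (ht : t ∈ SQbar n q) :
    (q.i : ℤ) ≤ round (n * t) ∧ round (n * t) ≤ q.j := by
  have hnt : (q.i : ℝ) ≤ n * t ∧ n * t ≤ q.j := by
    rcases n.eq_zero_or_pos with rfl | hn
    · have hj : q.j = 0 := Nat.le_zero.1 q.2.2
      have hi : q.i = 0 := Nat.le_zero.1 (q.2.1.trans q.2.2)
      simp [hi, hj]
    · have hn' : (0 : ℝ) < n := by exact_mod_cast hn
      rw [← le_div_iff₀' hn', ← div_le_iff₀' hn']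
      exact ⟨ht.1, ht.2.1⟩
  rw [← round_natCast (α := ℝ) q.i, ← round_natCast (α := ℝ) q.j]
  exact ⟨round_mono hnt.1, round_mono hnt.2⟩

theorem uIcc_round_subset_SQbar {n : ℕ} {q : QQ n} {t : ℝ} (ht : t ∈ SQbar n q) :
    uIcc t (round (n * t) / n) ⊆ SQbar n q := by
  obtain ⟨hi, hj⟩ := round_mem_Icc_of_mem_SQbar ht
  have hr : (round (n * t) / n : ℝ) ∈ Icc (q.i / n : ℝ) (q.j / n) :=
    ⟨div_le_div_of_nonneg_right (by exact_mod_cast hi) n.cast_nonneg,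
      div_le_div_of_nonneg_right (by exact_mod_cast hj) n.cast_nonneg⟩
  intro s hs
  have hsIcc := uIcc_subset_Icc ⟨ht.1, ht.2.1⟩ hr hs
  exact ⟨hsIcc.1, hsIcc.2, (gfun_le_of_mem_uIcc n hs).trans ht.2.2⟩

def QQ.diag {n : ℕ} (m : ℕ) (hm : m ≤ n) : QQ n := ⟨(m, m), le_rfl, hm⟩

theorem exists_diag_le_mem_range (n : ℕ) (q : QQ n)
    (c : _root_.ConnectedComponents (SQbar n q)) :
    ∃ m, ∃ hm : m ≤ n, ∃ h : (QQ.diag m hm : WithTop (QQ n)) ≤ q,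
      c ∈ range (compMap (SQbar_mono n h)) := by
  obtain ⟨⟨t, ht⟩, rfl⟩ := ConnectedComponents.surjective_coe c
  obtain ⟨hi, hj⟩ := round_mem_Icc_of_mem_SQbar ht
  obtain ⟨m, hm⟩ : ∃ m : ℕ, (m : ℤ) = round (n * t) :=
    ⟨_, Int.toNat_of_nonneg ((Int.natCast_nonneg _).trans hi)⟩
  have hseg := uIcc_round_subset_SQbar ht
  rw [← hm, Int.cast_natCast] at hseg
  have hmj : m ≤ q.j := by omega
  have hmn : m ≤ n := hmj.trans q.2.2
  have hdiag : (m / n : ℝ) ∈ SQbar n (QQ.diag m hmn) :=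
    ⟨le_rfl, le_rfl, by rw [gfun_natCast_div]; norm_num⟩
  refine ⟨m, hmn, WithTop.coe_le_coe.2 ⟨show q.i ≤ m by omega, hmj⟩,
    ConnectedComponents.mk ⟨_, hdiag⟩, ?_⟩
  exact ConnectedComponents.mk_eq_of_isPreconnected hseg isPreconnected_uIcc right_mem_uIcc
    left_mem_uIcc

section Nbar

variable (k : Type) [Field k] (n : ℕ)

theorem Nbar_endo_eq_id_of_app_top (φ : Nbar k n ⟶ Nbar k n) (htop : φ.app ⊤ = 𝟙 _) :
    φ = 𝟙 _ := by
  have hdiag : ∀ m (hm : m ≤ n), φ.app (QQ.diag m hm) = 𝟙 _ := fun m hm => by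
    have : PreconnectedSpace (SQbar n (QQ.diag m hm)) :=
      Subtype.preconnectedSpace (Slev_subsingleton _ _ _).isPreconnected
    have : Mono ((Nbar k n).map (homOfLE (le_top : (QQ.diag m hm : WithTop (QQ n)) ≤ ⊤))) :=
      compFunctor_mono_map _ (Function.injective_of_subsingleton _)
    exact NatTrans.app_eq_id_of_mono_map φ (homOfLE le_top) htop
  ext x : 2
  induction x using WithTop.recTopCoe with
  | top => exact htop
  | coe q =>
    refine compFunctor_app_eq_id_of_forall_mem_range φ q fun c => ?_
    obtain ⟨m, hm, hle, hc⟩ := exists_diag_le_mem_range n q c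
    exact ⟨_, hle, hdiag m hm, hc⟩

theorem Nbar_idempotent_eq_zero_or_id (e : Nbar k n ⟶ Nbar k n) (he : e ≫ e = e) :
    e = 0 ∨ e = 𝟙 _ := by
  have : PreconnectedSpace (SQbar n ⊤) := Subtype.preconnectedSpace (by
    rw [SQbar_top]; exact isPreconnected_Icc)
  have : Unique (_root_.ConnectedComponents (SQbar n ⊤)) :=
    uniqueOfSubsingleton (ConnectedComponents.mk ⟨0, by simp [SQbar_top]⟩)
  have he_top : (e.app ⊤).hom ∘ₗ (e.app ⊤).hom = (e.app ⊤).hom := by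
    rw [← ModuleCat.hom_comp, ← NatTrans.comp_app, he]
  rcases Finsupp.linearMap_eq_zero_or_id_of_idempotent _ he_top with h0 | h1
  · left
    have he0 : e.app ⊤ = 0 := ModuleCat.hom_ext h0
    have hcompl := Nbar_endo_eq_id_of_app_top k n (𝟙 _ - e) (by
      rw [NatTrans.app_sub, NatTrans.id_app, he0, sub_zero])
    rwa [sub_eq_self] at hcompl
  · exact Or.inr (Nbar_endo_eq_id_of_app_top k n e (ModuleCat.hom_ext h1))

end Nbar

theorem Nbar_indecomposable_general (k : Type) [Field k] (n : ℕ)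
    (A B : WithTop (QQ n) ⥤ ModuleCat k) (h : Nbar k n ≅ A ⊞ B) :
    (∀ x : WithTop (QQ n), CategoryTheory.Limits.IsZero (A.obj x)) ∨
    (∀ x : WithTop (QQ n), CategoryTheory.Limits.IsZero (B.obj x)) :=
  (isZero_or_isZero_of_iso_biprod (Nbar_idempotent_eq_zero_or_id k n) h).imp
    (fun hA => hA.obj) (fun hB => hB.obj)

/-- **Indecomposability of the augmented persistence module `N̄`**
(Section `sec:arb-dim`).  Whenever `N̄` is isomorphic to a biproduct `A ⊞ B` of functors
`Q̄ ⥤ ModuleCat k`, either `A` is pointwise zero or `B` is pointwise zero. -/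
theorem Nbar_indecomposable (k : Type) [Field k] (n : ℕ) (hn : 1 ≤ n)
    (A B : WithTop (QQ n) ⥤ ModuleCat k) (h : Nbar k n ≅ A ⊞ B) :
    (∀ x : WithTop (QQ n), CategoryTheory.Limits.IsZero (A.obj x)) ∨
    (∀ x : WithTop (QQ n), CategoryTheory.Limits.IsZero (B.obj x)) :=
  Nbar_indecomposable_general k n A B h
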